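/- Let k be a field of characteristic p > 0, let G₁ and G₂ be formal group laws over k, and let f ∈ k⟦t⟧ be a nonzero homomorphism from G₁ to G₂. Then there exists a natural number h ≥ 0 such that the least m with nonzero coefficient of t^m in f equals p^h; that is, the first nonzero term of f is u·t^{p^h} for some unit u ∈ k. -/

import Mathlib

open Finset

noncomputable section

namespace FGL

variable {R : Type*} [CommRing R]

/-- The coefficient of `x^i y^j` in a two-variable power series. -/
def coeff2 (R : Type*) [CommRing R] (i j : ℕ) (G : MvPowerSeries (Fin 2) R) : R :=
  MvPowerSeries.coeff (Finsupp.single 0 i + Finsupp.single 1 j) G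

/-- Substitution of two multivariate power series `a`, `b` (with zero constant
term) into a two-variable power series `G`, i.e. `G(a,b)`. -/
def subst2 {σ : Type*} (a b : MvPowerSeries σ R) (G : MvPowerSeries (Fin 2) R) :
    MvPowerSeries σ R :=
  fun d => ∑ p ∈ range ((d.sum fun _ e => e) + 1) ×ˢ range ((d.sum fun _ e => e) + 1),
    coeff2 R p.1 p.2 G * MvPowerSeries.coeff d (a ^ p.1 * b ^ p.2)

/-- Substitution of a multivariate power series `a` (with zero constant term)
into a one-variable power series `f`, i.e. `f(a)`. -/
def substM {σ : Type*} (a : MvPowerSeries σ R) (f : PowerSeries R) : MvPowerSeries σ R :=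
  fun d => ∑ k ∈ range ((d.sum fun _ e => e) + 1),
    PowerSeries.coeff k f * MvPowerSeries.coeff d (a ^ k)

/-- Substitution of a one-variable power series `a` (with zero constant term)
into a one-variable power series `f`, i.e. `f(a)`. -/
def substP (a f : PowerSeries R) : PowerSeries R :=
  PowerSeries.mk fun n => ∑ k ∈ range (n + 1),
    PowerSeries.coeff k f * PowerSeries.coeff n (a ^ k)

/-- Substitution of two one-variable power series `a`, `b` (with zero constant
term) into a two-variable power series `G`, i.e. `G(a,b)`. -/
def subst2P (a b : PowerSeries R) (G : MvPowerSeries (Fin 2) R) : PowerSeries R :=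
  PowerSeries.mk fun n => ∑ p ∈ range (n + 1) ×ˢ range (n + 1),
    coeff2 R p.1 p.2 G * PowerSeries.coeff n (a ^ p.1 * b ^ p.2)

/-- `G ∈ R⟦x,y⟧` is a (one-dimensional, commutative) formal group law over `R`:
`G(x,0) = x`, `G(0,y) = y`, `G(x,y) = G(y,x)`, and `G(G(x,y),z) = G(x,G(y,z))`. -/
def IsFGL (G : MvPowerSeries (Fin 2) R) : Prop :=
  subst2 (MvPowerSeries.X 0) 0 G = MvPowerSeries.X 0 ∧
  subst2 0 (MvPowerSeries.X 1) G = MvPowerSeries.X 1 ∧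
  subst2 (MvPowerSeries.X 1) (MvPowerSeries.X 0) G = G ∧
  subst2 (subst2 (MvPowerSeries.X 0) (MvPowerSeries.X 1) G)
      (MvPowerSeries.X 2 : MvPowerSeries (Fin 3) R) G
    = subst2 (MvPowerSeries.X 0) (subst2 (MvPowerSeries.X 1) (MvPowerSeries.X 2) G) G

/-- `f ∈ R⟦t⟧` is a homomorphism of formal group laws `G₁ → G₂`: it has zero
constant term and satisfies `G₂(f(x), f(y)) = f(G₁(x,y))`. -/
def IsHom (G₁ G₂ : MvPowerSeries (Fin 2) R) (f : PowerSeries R) : Prop :=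
  PowerSeries.constantCoeff f = 0 ∧
  subst2 (substM (MvPowerSeries.X 0) f) (substM (MvPowerSeries.X 1) f) G₂ = substM G₁ f

/-- `f ∈ R⟦t⟧` is a logarithm for `G`: `f(0) = 0`, `f'(0) = 1`, and
`f(G(x,y)) = f(x) + f(y)`. -/
def IsLog (G : MvPowerSeries (Fin 2) R) (f : PowerSeries R) : Prop :=
  PowerSeries.coeff 0 f = 0 ∧ PowerSeries.coeff 1 f = 1 ∧
  substM G f = substM (MvPowerSeries.X 0) f + substM (MvPowerSeries.X 1) f

/-- The `n`-series of `G`: `[1]_G(t) = t`, `[n+1]_G(t) = G([n]_G(t), t)`. -/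
def nSeries (G : MvPowerSeries (Fin 2) R) : ℕ → PowerSeries R
  | 0 => 0
  | 1 => PowerSeries.X
  | n + 2 => subst2P (nSeries G (n + 1)) PowerSeries.X G

end FGL

/-!
Let `m` be the order of `f` and compare the coefficients of `x^i y^j`, `i, j > 0`, `i + j = m`,
on both sides of `G₂(f(x), f(y)) = f(G₁(x, y))`. The unit laws say `G(x, y) = x + y + (mixed
terms)`, so `G₂(a, b) ≡ a + b` modulo degree `2m` whenever `a`, `b` have order `≥ m`, and `f(x) + f(y)` has
no mixed monomials, so the left side contributes `0`. On the right, `f(G₁) ≡ c_m (x + y)^m` modulo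
degree `m + 1`, contributing `c_m * choose m i`. Hence all `choose m i`, `0 < i < m`, vanish in `k`,
which by Lucas' theorem forces `m` to be a power of the characteristic.
-/

open MvPowerSeries Finsupp

theorem Nat.exists_eq_pow_of_cast_choose_eq_zero {k : Type*} [CommRing k] [IsDomain k]
    (p : ℕ) [CharP k p] {n : ℕ} (hn : 0 < n)
    (h : ∀ i, 0 < i → i < n → (n.choose i : k) = 0) : ∃ e, n = p ^ e := by
  rcases CharP.char_is_prime_or_zero k p with hp | rfl
  · have : Fact p.Prime := ⟨hp⟩
    refine ⟨_, Choose.eq_pow_multiplicity_of_choose_modEq_zero_nat hn fun i hi => ?_⟩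
    rw [Finset.mem_Icc] at hi
    exact Nat.modEq_zero_iff_dvd.mpr <| (CharP.cast_eq_zero_iff k p _).mp <| h i hi.1 (by omega)
  · refine ⟨0, by_contra fun hn1 => ?_⟩
    have := (CharP.cast_eq_zero_iff k 0 _).mp (h 1 one_pos (by omega))
    rw [Nat.choose_one_right, zero_dvd_iff] at this
    omega

namespace FGL

variable {R : Type*} [CommRing R]

theorem coeff_subst2 {σ : Type*} (a b : MvPowerSeries σ R) (G : MvPowerSeries (Fin 2) R)
    (d : σ →₀ ℕ) :
    coeff d (subst2 a b G) = ∑ q ∈ Finset.range (d.degree + 1) ×ˢ Finset.range (d.degree + 1),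
      coeff2 R q.1 q.2 G * coeff d (a ^ q.1 * b ^ q.2) := rfl

theorem coeff_substM {σ : Type*} (a : MvPowerSeries σ R) (f : PowerSeries R) (d : σ →₀ ℕ) :
    coeff d (substM a f) = ∑ n ∈ Finset.range (d.degree + 1),
      PowerSeries.coeff n f * coeff d (a ^ n) := rfl

-- The unit laws of `IsFGL` elaborate in `MvPowerSeries ℕ R`.
theorem coeff2_left_of_subst2 {G : MvPowerSeries (Fin 2) R}
    (hG : subst2 (X 0 : MvPowerSeries ℕ R) 0 G = X 0) (n : ℕ) :
    coeff2 R n 0 G = if n = 1 then 1 else 0 := by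
  have h := congrArg (coeff (single 0 n)) hG
  rw [coeff_subst2, Finset.sum_eq_single_of_mem (n, 0)] at h
  · simpa [coeff_X, coeff_X_pow, (single_injective _).eq_iff] using h
  · simp
  · rintro ⟨s, t⟩ _ hst
    rcases Nat.eq_zero_or_pos t with rfl | ht
    · have : s ≠ n := fun h => hst (by rw [h])
      simp [coeff_X_pow, (single_injective _).eq_iff, this.symm]
    · simp [zero_pow ht.ne']

theorem coeff2_right_of_subst2 {G : MvPowerSeries (Fin 2) R}
    (hG : subst2 0 (X 1 : MvPowerSeries ℕ R) G = X 1) (n : ℕ) :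
    coeff2 R 0 n G = if n = 1 then 1 else 0 := by
  have h := congrArg (coeff (single 1 n)) hG
  rw [coeff_subst2, Finset.sum_eq_single_of_mem (0, n)] at h
  · simpa [coeff_X, coeff_X_pow, (single_injective _).eq_iff] using h
  · simp
  · rintro ⟨s, t⟩ _ hst
    rcases Nat.eq_zero_or_pos s with rfl | hs
    · have : t ≠ n := fun h => hst (by rw [h])
      simp [coeff_X_pow, (single_injective _).eq_iff, this.symm]
    · simp [zero_pow hs.ne']

theorem coeff_substM_X {σ : Type*} [DecidableEq σ] (f : PowerSeries R) (s : σ) (d : σ →₀ ℕ) :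
    coeff d (substM (X s) f) = if d = single s (d s) then PowerSeries.coeff (d s) f else 0 := by
  have hsingle : ∀ n, d = single s n → n = d s := fun n h => by simp [h]
  rw [coeff_substM]
  split_ifs with h
  · rw [Finset.sum_eq_single_of_mem (d s)]
    · rw [coeff_X_pow, if_pos h, mul_one]
    · rw [Finset.mem_range, Nat.lt_succ_iff, h, degree_single, single_eq_same]
    · intro n _ hn
      rw [coeff_X_pow, if_neg (mt (hsingle n) hn), mul_zero]
  · refine Finset.sum_eq_zero fun n _ => ?_
    rw [coeff_X_pow, if_neg fun hn => h (hsingle n hn ▸ hn), mul_zero]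

theorem le_order_substM_X {σ : Type*} (f : PowerSeries R) {m : ℕ}
    (hf : ∀ n < m, PowerSeries.coeff n f = 0) (s : σ) : (m : ℕ∞) ≤ (substM (X s) f).order := by
  classical
  refine nat_le_order fun d hd => ?_
  rw [coeff_substM_X]
  split_ifs with h
  · exact hf _ (by exact_mod_cast (le_degree s d).trans_lt hd)
  · rfl

theorem natCast_mul_le_order_pow {σ : Type*} {a : MvPowerSeries σ R} {m : ℕ}
    (ha : (m : ℕ∞) ≤ a.order) (s : ℕ) : ((s * m : ℕ) : ℕ∞) ≤ (a ^ s).order := by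
  calc ((s * m : ℕ) : ℕ∞) = s • (m : ℕ∞) := by simp
    _ ≤ s • a.order := nsmul_le_nsmul_right ha s
    _ ≤ (a ^ s).order := le_order_pow s

theorem coeff_subst2_of_degree_lt {σ : Type*} {G : MvPowerSeries (Fin 2) R}
    (hG₀ : ∀ n, coeff2 R n 0 G = if n = 1 then 1 else 0)
    (hG₁ : ∀ n, coeff2 R 0 n G = if n = 1 then 1 else 0)
    {a b : MvPowerSeries σ R} {m : ℕ} (ha : (m : ℕ∞) ≤ a.order) (hb : (m : ℕ∞) ≤ b.order)
    {d : σ →₀ ℕ} (hd : d.degree < 2 * m) :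
    coeff d (subst2 a b G) = coeff d a + coeff d b := by
  have hterm : ∀ q : ℕ × ℕ, coeff2 R q.1 q.2 G * coeff d (a ^ q.1 * b ^ q.2) =
      (if q = (1, 0) then coeff d a else 0) + (if q = (0, 1) then coeff d b else 0) := by
    rintro ⟨s, t⟩
    rcases Nat.eq_zero_or_pos s with rfl | hs <;> rcases Nat.eq_zero_or_pos t with rfl | ht
    · simp [hG₀]
    · rcases eq_or_ne t 1 with rfl | ht1 <;> simp [*]
    · rcases eq_or_ne s 1 with rfl | hs1 <;> simp [*]
    · have hlt : (d.degree : ℕ∞) < (a ^ s * b ^ t).order := by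
        calc (d.degree : ℕ∞) < ((s * m + t * m : ℕ) : ℕ∞) := by
              exact_mod_cast hd.trans_le (by nlinarith)
          _ ≤ (a ^ s).order + (b ^ t).order := by
              push_cast [← Nat.cast_mul]
              exact add_le_add (natCast_mul_le_order_pow ha s) (natCast_mul_le_order_pow hb t)
          _ ≤ (a ^ s * b ^ t).order := le_order_mul
      rw [coeff_of_lt_order hlt]
      simp [hs.ne', ht.ne']
  rw [coeff_subst2, Finset.sum_congr rfl fun q _ => hterm q, Finset.sum_add_distrib,
    Finset.sum_ite_eq', Finset.sum_ite_eq']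
  rcases Nat.eq_zero_or_pos d.degree with h0 | hpos
  · have hm : (d.degree : ℕ∞) < m := by exact_mod_cast (by omega : d.degree < m)
    simp [coeff_of_lt_order (hm.trans_le ha), coeff_of_lt_order (hm.trans_le hb)]
  · simp [hpos]

theorem le_order_pow_sub_pow {σ : Type*} {G L : MvPowerSeries σ R} (hL : 1 ≤ L.order)
    (hGL : 2 ≤ (G - L).order) (n : ℕ) : (n + 1 : ℕ∞) ≤ (G ^ n - L ^ n).order := by
  have hG : 1 ≤ G.order :=
    calc 1 ≤ min (G - L).order L.order := le_min (le_trans (by norm_num) hGL) hL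
      _ ≤ (G - L + L).order := min_order_le_add
      _ = G.order := by rw [sub_add_cancel]
  induction n with
  | zero => simp
  | succ n ih =>
    have hLn : (n : ℕ∞) ≤ (L ^ n).order := by simpa using natCast_mul_le_order_pow hL n
    rw [show G ^ (n + 1) - L ^ (n + 1) = (G ^ n - L ^ n) * G + L ^ n * (G - L) by ring]
    calc ((n + 1 : ℕ) + 1 : ℕ∞)
        ≤ min ((G ^ n - L ^ n).order + G.order) ((L ^ n).order + (G - L).order) := by
          push_cast
          exact le_min (add_le_add ih hG) (by rw [add_assoc]; exact add_le_add hLn hGL)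
      _ ≤ min ((G ^ n - L ^ n) * G).order (L ^ n * (G - L)).order :=
          min_le_min le_order_mul le_order_mul
      _ ≤ _ := min_order_le_add

theorem coeff_substM_of_degree_eq {σ : Type*} (G : MvPowerSeries σ R) {f : PowerSeries R}
    {m : ℕ} (hf : ∀ n < m, PowerSeries.coeff n f = 0) {d : σ →₀ ℕ} (hd : d.degree = m) :
    coeff d (substM G f) = PowerSeries.coeff m f * coeff d (G ^ m) := by
  rw [coeff_substM, hd, Finset.sum_eq_single_of_mem m (by simp)]
  intro n hn hnm
  rw [hf n (by grind), zero_mul]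

theorem coeff_X_add_X_pow {σ : Type*} [DecidableEq σ] {s t : σ} (hst : s ≠ t) (i j : ℕ) :
    coeff (single s i + single t j) ((X s + X t : MvPowerSeries σ R) ^ (i + j)) =
      (i + j).choose i := by
  rw [(Commute.all _ _).add_pow', map_sum,
    Finset.sum_eq_single_of_mem (i, j) (by simp)]
  · rw [map_nsmul, X_pow_eq, X_pow_eq, monomial_mul_monomial, one_mul, coeff_monomial_same,
      nsmul_one]
  · rintro ⟨k, l⟩ hkl hne
    have hsum : k + l = i + j := Finset.HasAntidiagonal.mem_antidiagonal.mp hkl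
    rw [map_nsmul, X_pow_eq, X_pow_eq, monomial_mul_monomial, one_mul, coeff_monomial_ne,
      smul_zero]
    intro h
    have hk : i = k := by simpa [single_apply, hst.symm] using DFunLike.congr_fun h s
    exact hne (by rw [← hk, show l = j by omega])

theorem two_le_order_sub_X_add_X {G : MvPowerSeries (Fin 2) R}
    (hG₀ : ∀ n, coeff2 R n 0 G = if n = 1 then 1 else 0)
    (hG₁ : ∀ n, coeff2 R 0 n G = if n = 1 then 1 else 0) :
    2 ≤ (G - (X 0 + X 1)).order := by
  refine nat_le_order fun d hd => ?_
  obtain ⟨i, j, rfl⟩ : ∃ i j, d = single 0 i + single 1 j :=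
    ⟨d 0, d 1, by ext a; fin_cases a <;> simp⟩
  have hij : i + j < 2 := by simpa using hd
  have hG : coeff (single 0 i + single 1 j) G = coeff2 R i j G := rfl
  rw [map_sub, hG]
  rcases (by omega : j = 0 ∨ i = 0 ∧ j = 1) with rfl | ⟨rfl, rfl⟩
  · simp [hG₀, coeff_X, single_eq_single_iff]
  · simp [hG₁, coeff_X, single_eq_single_iff]

theorem IsHom.coeff_mul_choose_eq_zero {G₁ G₂ : MvPowerSeries (Fin 2) R} (h₁ : IsFGL G₁)
    (h₂ : IsFGL G₂) {f : PowerSeries R} (hf : IsHom G₁ G₂ f) {i j m : ℕ} (hi : 0 < i)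
    (hj : 0 < j) (hm : i + j = m) (hlt : ∀ n < m, PowerSeries.coeff n f = 0) :
    PowerSeries.coeff m f * m.choose i = 0 := by
  subst hm
  set d : Fin 2 →₀ ℕ := single 0 i + single 1 j
  have hd : d.degree = i + j := by simp [d]
  have hmixed : ∀ s, d ≠ single s (d s) := by
    intro s h
    fin_cases s
    · simpa [d, hj.ne'] using DFunLike.congr_fun h 1
    · simpa [d, hi.ne'] using DFunLike.congr_fun h 0
  have hlhs : coeff d (subst2 (substM (X 0) f) (substM (X 1) f) G₂) = 0 := by
    rw [coeff_subst2_of_degree_lt (coeff2_left_of_subst2 h₂.1) (coeff2_right_of_subst2 h₂.2.1)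
      (le_order_substM_X f hlt 0) (le_order_substM_X f hlt 1) (by omega), coeff_substM_X,
      coeff_substM_X, if_neg (hmixed 0), if_neg (hmixed 1), add_zero]
  have hL : 1 ≤ (X 0 + X 1 : MvPowerSeries (Fin 2) R).order := by
    rw [one_le_order_iff_constCoeff_eq_zero]
    simp
  have hpow : coeff d (G₁ ^ (i + j)) = coeff d ((X 0 + X 1) ^ (i + j)) := by
    rw [← sub_eq_zero, ← map_sub]
    refine coeff_of_lt_order (lt_of_lt_of_le ?_ (le_order_pow_sub_pow hL
      (two_le_order_sub_X_add_X (coeff2_left_of_subst2 h₁.1) (coeff2_right_of_subst2 h₁.2.1))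
      _))
    rw [hd]
    exact_mod_cast Nat.lt_succ_self _
  rw [← hlhs, hf.2, coeff_substM_of_degree_eq G₁ hlt hd, hpow, coeff_X_add_X_pow Fin.zero_ne_one]

end FGL

theorem statement_10_general {k : Type*} [Field k] (p : ℕ) [CharP k p]
    (G₁ G₂ : MvPowerSeries (Fin 2) k) (h₁ : FGL.IsFGL G₁) (h₂ : FGL.IsFGL G₂)
    (f : PowerSeries k) (hf : FGL.IsHom G₁ G₂ f) (hf0 : f ≠ 0) :
    ∃ h : ℕ, (∀ m < p ^ h, PowerSeries.coeff m f = 0) ∧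
      PowerSeries.coeff (p ^ h) f ≠ 0 := by
  set m := f.order.toNat
  have hm : PowerSeries.coeff m f ≠ 0 := PowerSeries.coeff_order hf0
  have hlt : ∀ n < m, PowerSeries.coeff n f = 0 := PowerSeries.coeff_of_lt_order_toNat
  have hm0 : 0 < m := Nat.pos_of_ne_zero fun h0 => hm (by
    rw [h0, PowerSeries.coeff_zero_eq_constantCoeff]; exact hf.1)
  have hchoose : ∀ i, 0 < i → i < m → (m.choose i : k) = 0 := fun i hi him =>
    (mul_eq_zero.mp <| hf.coeff_mul_choose_eq_zero h₁ h₂ hi (Nat.sub_pos_of_lt him)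
      (Nat.add_sub_cancel' him.le) hlt).resolve_left hm
  obtain ⟨e, he⟩ := Nat.exists_eq_pow_of_cast_choose_eq_zero p hm0 hchoose
  exact ⟨e, he ▸ hlt, he ▸ hm⟩

/-- Over a field of characteristic `p > 0`, the first nonzero term of a nonzero
homomorphism of formal group laws occurs in degree `p^h` for some `h ≥ 0`. -/
theorem statement_10 {k : Type*} [Field k] (p : ℕ) (hp : 0 < p) [CharP k p]
    (G₁ G₂ : MvPowerSeries (Fin 2) k) (h₁ : FGL.IsFGL G₁) (h₂ : FGL.IsFGL G₂)
    (f : PowerSeries k) (hf : FGL.IsHom G₁ G₂ f) (hf0 : f ≠ 0) :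
    ∃ h : ℕ, (∀ m < p ^ h, PowerSeries.coeff m f = 0) ∧
      PowerSeries.coeff (p ^ h) f ≠ 0 :=
  statement_10_general p G₁ G₂ h₁ h₂ f hf hf0
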